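/- arXiv:2105.05177 — 4 statements merged into one kernel-verified Lean document; each statement's English description precedes it below -/
import Mathlib

section
/- Let W = UΛ_r U† be a condensed eigendecomposition with Λ_r ∈ 𝕊^r_{++} having diagonal entries in (0,1], U† U = I_r, and H := (VVᵀ)⁻¹ with U† = UᵀH. Define P := (U†)ᵀ(Λ_r⁻¹ − I)U†. Then Wᵀ P W = (I − W)ᵀ H W. -/
open Matrix

/-- For W = U Λ_r U† with Λ_r diagonal, entries in (0,1], U† U = I,
H symmetric with U† = Uᵀ H, and P := (U†)ᵀ(Λ_r⁻¹ − I)U†, the identity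
Wᵀ P W = (I − W)ᵀ H W holds. -/
theorem stmt_11 {n r : ℕ}
    (U : Matrix (Fin n) (Fin r) ℝ) (Udag : Matrix (Fin r) (Fin n) ℝ)
    (d : Fin r → ℝ) (hd : ∀ i, 0 < d i ∧ d i ≤ 1)
    (H W : Matrix (Fin n) (Fin n) ℝ)
    (hHsymm : H.IsSymm)
    (hUdagU : Udag * U = 1)
    (hUdag : Udag = Uᵀ * H)
    (hW : W = U * Matrix.diagonal d * Udag) :
    Wᵀ * (Udagᵀ * ((Matrix.diagonal d)⁻¹ - 1) * Udag) * W = (1 - W)ᵀ * H * W := by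
  have hd0 : ∀ i, d i ≠ 0 := fun i => (hd i).1.ne'
  have hdinv : (Matrix.diagonal d)⁻¹ = Matrix.diagonal (fun i => (d i)⁻¹) := by
    refine Matrix.inv_eq_left_inv ?_
    rw [Matrix.diagonal_mul_diagonal, ← Matrix.diagonal_one]
    exact congrArg Matrix.diagonal (funext fun i => inv_mul_cancel₀ (hd0 i))
  have hHU : H * U = Udagᵀ := by
    have := congrArg Matrix.transpose hUdag
    simpa [Matrix.transpose_mul, hHsymm.eq] using this.symm
  have h1 : ∀ {m : ℕ} (X : Matrix (Fin r) (Fin m) ℝ), Udag * (U * X) = X := by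
    intro m X; rw [← Matrix.mul_assoc, hUdagU, Matrix.one_mul]
  have h2 : ∀ {m : ℕ} (X : Matrix (Fin r) (Fin m) ℝ), Uᵀ * (Udagᵀ * X) = Uᵀ * Udagᵀ * X := by
    intro m X; rw [Matrix.mul_assoc]
  have hUtUdagt : Uᵀ * Udagᵀ = 1 := by
    have := congrArg Matrix.transpose hUdagU
    simpa [Matrix.transpose_mul] using this
  subst hW
  rw [hdinv]
  simp only [Matrix.transpose_mul, Matrix.diagonal_transpose, Matrix.sub_mul, Matrix.one_mul,
    Matrix.mul_sub, Matrix.mul_one, Matrix.mul_assoc, h1, hHU]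
  have h3 : ∀ {m : ℕ} (X : Matrix (Fin r) (Fin m) ℝ), H * (U * X) = Udagᵀ * X := by
    intro m X
    rw [← Matrix.mul_assoc, hHU]
  have h4 : ∀ {m : ℕ} (X : Matrix (Fin r) (Fin m) ℝ), Uᵀ * (Udagᵀ * X) = X := by
    intro m X
    rw [← Matrix.mul_assoc, hUtUdagt, Matrix.one_mul]
  simp only [h4, Matrix.transpose_sub, Matrix.transpose_one, Matrix.transpose_mul,
    Matrix.diagonal_transpose, Matrix.sub_mul, Matrix.one_mul, Matrix.mul_assoc, h1, hHU]
  simp only [h3, h4]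
  simp only [← Matrix.mul_assoc, Matrix.diagonal_mul_diagonal]
  congr 3
  funext i
  field_simp
end

section
/- Under the hypotheses of the previous identity, for any q ∈ ℝⁿ and u := Wq, the value Φ(u) := ½ uᵀ P u (with P := (U†)ᵀ(Λ_r⁻¹ − I)U†) equals ½ (q − u)ᵀ H u. -/
open Matrix

/-- Under the hypotheses of Statement 11, for any q and u := Wq, the value
Φ(u) = ½ uᵀ P u with P := (U†)ᵀ(Λ_r⁻¹ − I)U† equals ½ (q − u)ᵀ H u. -/
theorem stmt_12 {n r : ℕ}
    (U : Matrix (Fin n) (Fin r) ℝ) (Udag : Matrix (Fin r) (Fin n) ℝ)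
    (d : Fin r → ℝ) (hd : ∀ i, 0 < d i ∧ d i ≤ 1)
    (H W : Matrix (Fin n) (Fin n) ℝ)
    (hHsymm : H.IsSymm)
    (hUdagU : Udag * U = 1)
    (hUdag : Udag = Uᵀ * H)
    (hW : W = U * Matrix.diagonal d * Udag)
    (q : Fin n → ℝ) :
    (1 / 2 : ℝ) * ((W.mulVec q) ⬝ᵥ
        (Udagᵀ * ((Matrix.diagonal d)⁻¹ - 1) * Udag).mulVec (W.mulVec q)) =
      (1 / 2 : ℝ) * ((q - W.mulVec q) ⬝ᵥ H.mulVec (W.mulVec q)) := by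
  set D : Matrix (Fin r) (Fin r) ℝ := Matrix.diagonal d with hD
  have hDinv : D * D⁻¹ = 1 := by
    apply Matrix.mul_nonsing_inv
    rw [hD, Matrix.det_diagonal]
    exact isUnit_iff_ne_zero.mpr
      (Finset.prod_ne_zero_iff.mpr fun i _ => ne_of_gt (hd i).1)
  have hHU : H * U = Udagᵀ := by
    rw [hUdag, Matrix.transpose_mul, Matrix.transpose_transpose, hHsymm.eq]
  have hUdagW : Udag * W = D * Udag := by
    rw [hW, ← Matrix.mul_assoc, ← Matrix.mul_assoc, hUdagU, Matrix.one_mul]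
  have hHW : H * W = Udagᵀ * D * Udag := by
    rw [hW, ← Matrix.mul_assoc, ← Matrix.mul_assoc, hHU]
  have key : Wᵀ * (Udagᵀ * (D⁻¹ - 1) * Udag) * W = (1 - W)ᵀ * (H * W) := by
    have hWUdagT : Wᵀ * Udagᵀ = Udagᵀ * D := by
      have := congrArg Matrix.transpose hUdagW
      simpa [Matrix.transpose_mul, hD, Matrix.diagonal_transpose] using this
    have lhs_eq : Wᵀ * (Udagᵀ * (D⁻¹ - 1) * Udag) * W
        = Udagᵀ * (D * (D⁻¹ - 1) * D) * Udag := by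
      calc Wᵀ * (Udagᵀ * (D⁻¹ - 1) * Udag) * W
          = (Wᵀ * Udagᵀ) * (D⁻¹ - 1) * (Udag * W) := by
            simp only [Matrix.mul_assoc]
        _ = (Udagᵀ * D) * (D⁻¹ - 1) * (D * Udag) := by rw [hWUdagT, hUdagW]
        _ = Udagᵀ * (D * (D⁻¹ - 1) * D) * Udag := by simp only [Matrix.mul_assoc]
    have hmid : D * (D⁻¹ - 1) * D = D - D * D := by
      rw [Matrix.mul_sub, hDinv, Matrix.mul_one, Matrix.sub_mul, Matrix.one_mul]
    have rhs_eq : (1 - W)ᵀ * (H * W) = Udagᵀ * (D - D * D) * Udag := by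
      have hWHW : Wᵀ * (H * W) = Udagᵀ * (D * D) * Udag := by
        calc Wᵀ * (H * W) = Wᵀ * (Udagᵀ * (D * Udag)) := by
              rw [hHW, Matrix.mul_assoc]
          _ = (Wᵀ * Udagᵀ) * (D * Udag) := by rw [Matrix.mul_assoc]
          _ = (Udagᵀ * D) * (D * Udag) := by rw [hWUdagT]
          _ = Udagᵀ * (D * D) * Udag := by simp only [Matrix.mul_assoc]
      rw [Matrix.transpose_sub, Matrix.transpose_one, Matrix.sub_mul,
        Matrix.one_mul, hWHW, hHW]
      rw [Matrix.mul_sub, Matrix.sub_mul]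
    rw [lhs_eq, hmid, rhs_eq]
  have quad : ∀ (M N : Matrix (Fin n) (Fin n) ℝ) (v : Fin n → ℝ),
      (M.mulVec q) ⬝ᵥ N.mulVec v = q ⬝ᵥ (Mᵀ * N).mulVec v := by
    intro M N v
    rw [← Matrix.mulVec_mulVec, Matrix.dotProduct_mulVec q, Matrix.vecMul_transpose]
  have hsub : q - W.mulVec q = (1 - W).mulVec q := by
    rw [Matrix.sub_mulVec, Matrix.one_mulVec]
  congr 1
  calc (W.mulVec q) ⬝ᵥ (Udagᵀ * (D⁻¹ - 1) * Udag).mulVec (W.mulVec q)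
      = q ⬝ᵥ (Wᵀ * (Udagᵀ * (D⁻¹ - 1) * Udag)).mulVec (W.mulVec q) := quad _ _ _
    _ = q ⬝ᵥ (Wᵀ * (Udagᵀ * (D⁻¹ - 1) * Udag) * W).mulVec q := by
        rw [Matrix.mulVec_mulVec]
    _ = q ⬝ᵥ ((1 - W)ᵀ * (H * W)).mulVec q := by rw [key]
    _ = q ⬝ᵥ ((1 - W)ᵀ * H * W).mulVec q := by rw [Matrix.mul_assoc]
    _ = ((1 - W).mulVec q) ⬝ᵥ (H * W).mulVec q := by
        rw [quad, Matrix.mul_assoc]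
    _ = (q - W.mulVec q) ⬝ᵥ H.mulVec (W.mulVec q) := by
        rw [hsub, Matrix.mulVec_mulVec]
end

section
/- Let W ∈ ℝ^{n×n} be similar to a symmetric positive semidefinite matrix with λ_max(W) ∈ (0,1], let H = (VVᵀ)⁻¹ where V is an eigenvector matrix of W, and let Φ(x) := i_{range(W)}(x) + ½ xᵀPx with P := (U†)ᵀ(Λ_r⁻¹ − I)U† as constructed from the condensed eigendecomposition W = UΛ_rU†. Then for every y ∈ ℝⁿ, Wy is the unique minimizer over x ∈ ℝⁿ of ½‖x − y‖²_H + Φ(x); that is, W = prox_{Φ, ‖·‖_H}. -/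
open Matrix

private theorem diag_inv_pt {n : ℕ} (v : Fin n → ℝ) (hv : ∀ i, v i ≠ 0) :
    (Matrix.diagonal v)⁻¹ = Matrix.diagonal (fun i => (v i)⁻¹) := by
  rw [Matrix.inv_diagonal]
  have hu : IsUnit v := by
    refine ⟨⟨v, fun i => (v i)⁻¹, ?_, ?_⟩, rfl⟩ <;> funext i <;>
      simp [mul_inv_cancel₀ (hv i), inv_mul_cancel₀ (hv i)]
  obtain ⟨u, hu⟩ := hu
  rw [← hu, Ring.inverse_unit]
  have he : (↑u⁻¹ : Fin n → ℝ) = fun i => (v i)⁻¹ := by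
    funext i
    have h1 : (↑u * ↑u⁻¹ : Fin n → ℝ) = 1 := by simp
    have h2 : v i * (↑u⁻¹ : Fin n → ℝ) i = 1 := by
      have := congrFun h1 i; simpa [hu] using this
    exact eq_inv_of_mul_eq_one_left (by linear_combination h2)
  rw [he, hu]

private theorem quad_key (d b t : ℝ) (hd : 0 < d) :
    ((t - b) ^ 2 + (d⁻¹ - 1) * t ^ 2) - ((d * b - b) ^ 2 + (d⁻¹ - 1) * (d * b) ^ 2)
      = d⁻¹ * (t - d * b) ^ 2 := by
  field_simp
  ring

/-- ((ii) ⇒ (i) of the paper's main theorem.) Let W = V Λ V⁻¹ with V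
invertible and Λ diagonal with first r entries in (0,1] and the rest zero, H := (VVᵀ)⁻¹,
and P := (U†)ᵀ(Λ_r⁻¹ − I)U† from the condensed eigendecomposition. Then for every y,
Wy is the unique minimizer of x ↦ ½‖x−y‖²_H + Φ(x) where Φ is the quadratic ½ xᵀPx plus
the indicator of range(W); i.e. Wy is the unique minimizer of ½‖x−y‖²_H + ½xᵀPx over
x ∈ range(W). -/
theorem stmt_14 {n r : ℕ} (hr : r ≤ n)
    (V W : Matrix (Fin n) (Fin n) ℝ) (hV : IsUnit V.det)
    (d : Fin n → ℝ)
    (hd : ∀ i : Fin n, ((i : ℕ) < r → 0 < d i ∧ d i ≤ 1) ∧ (r ≤ (i : ℕ) → d i = 0))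
    (hW : W = V * Matrix.diagonal d * V⁻¹)
    (H : Matrix (Fin n) (Fin n) ℝ) (hH : H = (V * Vᵀ)⁻¹)
    (U : Matrix (Fin n) (Fin r) ℝ) (hU : U = V.submatrix id (Fin.castLE hr))
    (Udag : Matrix (Fin r) (Fin n) ℝ) (hUdag : Udag = V⁻¹.submatrix (Fin.castLE hr) id)
    (P : Matrix (Fin n) (Fin n) ℝ)
    (hP : P = Udagᵀ * ((Matrix.diagonal (fun j : Fin r => d (Fin.castLE hr j)))⁻¹ - 1)
        * Udag) :
    ∀ y : Fin n → ℝ,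
      W.mulVec y ∈ Set.range W.mulVec ∧
      (∀ x ∈ Set.range W.mulVec,
        (1 / 2 : ℝ) * ((W.mulVec y - y) ⬝ᵥ H.mulVec (W.mulVec y - y)) +
            (1 / 2 : ℝ) * ((W.mulVec y) ⬝ᵥ P.mulVec (W.mulVec y)) ≤
          (1 / 2 : ℝ) * ((x - y) ⬝ᵥ H.mulVec (x - y)) +
            (1 / 2 : ℝ) * (x ⬝ᵥ P.mulVec x)) ∧
      (∀ x ∈ Set.range W.mulVec,
        (1 / 2 : ℝ) * ((x - y) ⬝ᵥ H.mulVec (x - y)) +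
            (1 / 2 : ℝ) * (x ⬝ᵥ P.mulVec x) =
          (1 / 2 : ℝ) * ((W.mulVec y - y) ⬝ᵥ H.mulVec (W.mulVec y - y)) +
            (1 / 2 : ℝ) * ((W.mulVec y) ⬝ᵥ P.mulVec (W.mulVec y)) →
        x = W.mulVec y) := by
  intro y
  set A := V⁻¹ with hA
  have hAV : A * V = 1 := V.nonsing_inv_mul hV
  have hVA : V * A = 1 := V.mul_nonsing_inv hV
  -- recovery of x from its coordinates
  have hrec : ∀ x : Fin n → ℝ, V.mulVec (A.mulVec x) = x := by
    intro x
    rw [Matrix.mulVec_mulVec, hVA, Matrix.one_mulVec]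
  -- e' : coefficient vector for P in coordinates
  set e' : Fin n → ℝ := fun i => if (i : ℕ) < r then (d i)⁻¹ - 1 else 0 with he'
  set b : Fin n → ℝ := A.mulVec y with hb
  -- H quadratic form
  have hHquad : ∀ u : Fin n → ℝ,
      u ⬝ᵥ H.mulVec u = ∑ i, (A.mulVec u i) ^ 2 := by
    intro u
    have h1 : H = Aᵀ * A := by
      rw [hH, Matrix.mul_inv_rev, Matrix.transpose_nonsing_inv, hA]
    rw [h1, ← Matrix.mulVec_mulVec, Matrix.dotProduct_mulVec, Matrix.vecMul_transpose]
    simp [dotProduct, sq]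
  -- P quadratic form
  have hdr : ∀ j : Fin r, d (Fin.castLE hr j) ≠ 0 := by
    intro j
    exact ne_of_gt ((hd (Fin.castLE hr j)).1 (by simpa using j.isLt)).1
  have hPquad : ∀ u : Fin n → ℝ,
      u ⬝ᵥ P.mulVec u
        = ∑ j : Fin r, ((d (Fin.castLE hr j))⁻¹ - 1) * (A.mulVec u (Fin.castLE hr j)) ^ 2 := by
    intro u
    have hE : ((Matrix.diagonal (fun j : Fin r => d (Fin.castLE hr j)))⁻¹ - 1)
        = Matrix.diagonal (fun j : Fin r => (d (Fin.castLE hr j))⁻¹ - 1) := by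
      rw [diag_inv_pt _ hdr, ← Matrix.diagonal_one, Matrix.diagonal_sub]
    have hM : Udag.mulVec u = fun j => A.mulVec u (Fin.castLE hr j) := by
      rw [hUdag]; rfl
    rw [hP, hE, Matrix.mul_assoc, ← Matrix.mulVec_mulVec, Matrix.dotProduct_mulVec,
      Matrix.vecMul_transpose, ← Matrix.mulVec_mulVec, hM]
    simp only [dotProduct, Matrix.mulVec_diagonal, sq]
    refine Finset.sum_congr rfl fun j _ => ?_
    ring
  -- coordinates of elements of the range vanish beyond r
  have hcoord : ∀ z : Fin n → ℝ, A.mulVec (W.mulVec z) = fun i => d i * A.mulVec z i := by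
    intro z
    funext i
    rw [Matrix.mulVec_mulVec, hW, ← Matrix.mul_assoc, ← Matrix.mul_assoc, hAV,
      Matrix.one_mul, ← Matrix.mulVec_mulVec, Matrix.mulVec_diagonal]
  have hcstar : A.mulVec (W.mulVec y) = fun i => d i * b i := hcoord y
  -- the objective in coordinates
  have hobj : ∀ x : Fin n → ℝ,
      (1 / 2 : ℝ) * ((x - y) ⬝ᵥ H.mulVec (x - y)) + (1 / 2 : ℝ) * (x ⬝ᵥ P.mulVec x)
        = (1 / 2 : ℝ) * ∑ i, ((A.mulVec x i - b i) ^ 2 + e' i * (A.mulVec x i) ^ 2) := by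
    intro x
    have hsub : A.mulVec (x - y) = fun i => A.mulVec x i - b i := by
      funext i; rw [Matrix.mulVec_sub]; rfl
    have hsum2 : ∑ j : Fin r, ((d (Fin.castLE hr j))⁻¹ - 1) * (A.mulVec x (Fin.castLE hr j)) ^ 2
        = ∑ i, e' i * (A.mulVec x i) ^ 2 := by
      rw [← Finset.sum_subset (Finset.subset_univ (Finset.univ.map (Fin.castLEEmb hr)))]
      · rw [Finset.sum_map]
        refine Finset.sum_congr rfl fun j _ => ?_
        simp [he', Fin.castLEEmb, j.isLt, Nat.lt_of_lt_of_le j.isLt hr]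
      · intro i _ hi
        have : ¬ (i : ℕ) < r := by
          intro hlt
          exact hi (Finset.mem_map.2 ⟨⟨(i : ℕ), hlt⟩, Finset.mem_univ _, by
            simp [Fin.castLEEmb]⟩)
        simp [he', this]
    rw [hHquad, hPquad, hsub, hsum2, ← mul_add, ← Finset.sum_add_distrib]
  -- per-coordinate weights
  set w : Fin n → ℝ := fun i => if (i : ℕ) < r then (d i)⁻¹ else 1 with hw
  have hwpos : ∀ i, 0 < w i := by
    intro i
    by_cases h : (i : ℕ) < r
    · simp only [hw, if_pos h]; exact inv_pos.2 ((hd i).1 h).1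
    · simp [hw, h]
  -- key pointwise difference identity, for tail-zero coordinate vectors
  have hkey : ∀ (c : Fin n → ℝ), (∀ i : Fin n, r ≤ (i : ℕ) → c i = 0) → ∀ i : Fin n,
      ((c i - b i) ^ 2 + e' i * (c i) ^ 2)
        - ((d i * b i - b i) ^ 2 + e' i * (d i * b i) ^ 2)
        = w i * (c i - d i * b i) ^ 2 := by
    intro c hc i
    by_cases h : (i : ℕ) < r
    · simp only [he', hw, if_pos h]
      exact quad_key (d i) (b i) (c i) ((hd i).1 h).1
    · have hd0 : d i = 0 := (hd i).2 (le_of_not_gt h)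
      have hc0 : c i = 0 := hc i (le_of_not_gt h)
      simp [he', hw, h, hd0, hc0]
  -- main difference formula for x in range
  have hdiff : ∀ x ∈ Set.range W.mulVec,
      ((1 / 2 : ℝ) * ((x - y) ⬝ᵥ H.mulVec (x - y)) + (1 / 2 : ℝ) * (x ⬝ᵥ P.mulVec x))
        - ((1 / 2 : ℝ) * ((W.mulVec y - y) ⬝ᵥ H.mulVec (W.mulVec y - y)) +
            (1 / 2 : ℝ) * ((W.mulVec y) ⬝ᵥ P.mulVec (W.mulVec y)))
        = (1 / 2 : ℝ) * ∑ i, w i * (A.mulVec x i - d i * b i) ^ 2 := by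
    rintro x ⟨z, rfl⟩
    have htail : ∀ i : Fin n, r ≤ (i : ℕ) → A.mulVec (W.mulVec z) i = 0 := by
      intro i hi
      rw [hcoord z]
      simp [(hd i).2 hi]
    rw [hobj, hobj, ← mul_sub, ← Finset.sum_sub_distrib]
    congr 1
    refine Finset.sum_congr rfl fun i _ => ?_
    have h1 := hkey (A.mulVec (W.mulVec z)) htail i
    simp only [hcstar]
    exact h1
  refine ⟨⟨y, rfl⟩, ?_, ?_⟩
  · intro x hx
    have h := hdiff x hx
    have hnn : (0 : ℝ) ≤ ∑ i, w i * (A.mulVec x i - d i * b i) ^ 2 :=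
      Finset.sum_nonneg fun i _ => mul_nonneg (le_of_lt (hwpos i)) (sq_nonneg _)
    linarith
  · intro x hx heq
    have h := hdiff x hx
    rw [heq, sub_self] at h
    have hzero : ∑ i, w i * (A.mulVec x i - d i * b i) ^ 2 = 0 := by linarith
    have hterm : ∀ i ∈ Finset.univ, w i * (A.mulVec x i - d i * b i) ^ 2 = 0 :=
      (Finset.sum_eq_zero_iff_of_nonneg fun i _ =>
        mul_nonneg (le_of_lt (hwpos i)) (sq_nonneg _)).1 hzero
    have hceq : A.mulVec x = A.mulVec (W.mulVec y) := by
      funext i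
      have h0 := hterm i (Finset.mem_univ i)
      have h1 : (A.mulVec x i - d i * b i) ^ 2 = 0 :=
        (mul_eq_zero.1 h0).resolve_left (ne_of_gt (hwpos i))
      have h2 : A.mulVec x i = d i * b i := by
        have := sq_eq_zero_iff.1 h1; linarith
      rw [hcstar, h2]
    calc x = V.mulVec (A.mulVec x) := (hrec x).symm
      _ = V.mulVec (A.mulVec (W.mulVec y)) := by rw [hceq]
      _ = W.mulVec y := hrec _
end

section
/- Suppose W ∈ ℝ^{n×n} is nonzero and there exist a symmetric positive definite H and a symmetric positive semidefinite P such that for every y ∈ ℝⁿ, Wy is the minimizer over x ∈ range(W) of ‖x−y‖²_H + xᵀPx. Then W = SH for some symmetric positive semidefinite matrix S; consequently W is similar to a symmetric positive semidefinite matrix and all eigenvalues of W are real and lie in [0, 1]. -/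
/-!
Testing the minimality of `W y` along the directions `W y + t • W z` gives the normal equations
`Wᵀ (H + P) W = Wᵀ H`. Hence `H W = Wᵀ H = Wᵀ (H + P) W ≥ 0`, and
`H - H W = (1 - W)ᵀ H (1 - W) + Wᵀ P W ≥ 0`, so `0 ≤ H W ≤ H` in the Loewner order.
Then `S = H⁻¹ (H W) H⁻¹ ≥ 0` satisfies `W = S H`, and with `R = √H` the matrix
`W = H⁻¹ (H W)` is similar to `N = R⁻¹ (H W) R⁻¹`, where `0 ≤ N ≤ 1`; so the eigenvalues of `W`
are those of `N` and lie in `[0, 1]`.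
-/

open Matrix
open scoped MatrixOrder ComplexOrder

theorem eq_zero_of_forall_quadratic_nonneg {a b : ℝ} (h : ∀ t : ℝ, 0 ≤ a * (t * t) + b * t) :
    b = 0 := by
  have hd := discrim_le_zero (a := a) (b := b) (c := 0) (by simpa using h)
  rw [discrim] at hd
  nlinarith [sq_nonneg b]

theorem RCLike.nonneg_of_mul_nonneg_left {𝕜 : Type*} [RCLike 𝕜] {x s : 𝕜} (h : 0 ≤ x * s)
    (hs : 0 < s) : 0 ≤ x := by
  simpa [mul_assoc, mul_inv_cancel₀ hs.ne'] using mul_nonneg h (RCLike.inv_pos_of_pos hs).le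

section StarOrderedRing

variable {A : Type*} [Ring A] [StarRing A] [PartialOrder A] [StarOrderedRing A] {w h p : A}

theorem mul_eq_star_mul_of_star_mul_add_mul_eq (hh : 0 ≤ h) (hp : 0 ≤ p)
    (e : star w * (h + p) * w = star w * h) : h * w = star w * h := by
  have hsa : IsSelfAdjoint (star w * (h + p) * w) :=
    (IsSelfAdjoint.of_nonneg (add_nonneg hh hp)).conjugate' w
  rw [← e, ← hsa.star_eq, e, star_mul, star_star, (IsSelfAdjoint.of_nonneg hh).star_eq]

theorem nonneg_mul_of_star_mul_add_mul_eq (hh : 0 ≤ h) (hp : 0 ≤ p)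
    (e : star w * (h + p) * w = star w * h) : 0 ≤ h * w := by
  rw [mul_eq_star_mul_of_star_mul_add_mul_eq hh hp e, ← e]
  exact star_left_conjugate_nonneg (add_nonneg hh hp) w

theorem mul_le_self_of_star_mul_add_mul_eq (hh : 0 ≤ h) (hp : 0 ≤ p)
    (e : star w * (h + p) * w = star w * h) : h * w ≤ h := by
  have hdiff : h - h * w = star (1 - w) * h * (1 - w) + star w * p * w :=
    calc h - h * w = h - h * w - star w * h + star w * (h + p) * w := by rw [e]; abel
      _ = _ := by rw [star_sub, star_one]; noncomm_ring
  rw [← sub_nonneg, hdiff]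
  exact add_nonneg (star_left_conjugate_nonneg hh _) (star_left_conjugate_nonneg hp _)

end StarOrderedRing

namespace Matrix

variable {n : Type*} [Fintype n]

theorem IsSymm.dotProduct_mulVec_add_smul {R : Type*} [CommRing R] {A : Matrix n n R}
    (hA : A.IsSymm) (u d : n → R) (t : R) :
    (u + t • d) ⬝ᵥ A *ᵥ (u + t • d) =
      u ⬝ᵥ A *ᵥ u + (d ⬝ᵥ A *ᵥ d) * (t * t) + 2 * (d ⬝ᵥ A *ᵥ u) * t := by
  have hcomm : u ⬝ᵥ A *ᵥ d = d ⬝ᵥ A *ᵥ u := by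
    rw [← dotProduct_transpose_mulVec, hA.eq]
  simp only [mulVec_add, mulVec_smul, add_dotProduct, dotProduct_add, dotProduct_smul,
    smul_dotProduct, smul_eq_mul, hcomm]
  ring

theorem transpose_mul_add_mul_eq_of_forall_le {W H P : Matrix n n ℝ} (hH : H.IsSymm)
    (hP : P.IsSymm)
    (hmin : ∀ y : n → ℝ, ∀ x ∈ Set.range W.mulVec,
      (W *ᵥ y - y) ⬝ᵥ H *ᵥ (W *ᵥ y - y) + (W *ᵥ y) ⬝ᵥ P *ᵥ (W *ᵥ y) ≤
        (x - y) ⬝ᵥ H *ᵥ (x - y) + x ⬝ᵥ P *ᵥ x) :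
    Wᵀ * (H + P) * W = Wᵀ * H := by
  rw [← sub_eq_zero, ext_iff_mulVec]
  intro y
  rw [zero_mulVec]
  refine dotProduct_eq_zero _ fun z ↦ ?_
  set u := W *ᵥ y
  set d := W *ᵥ z
  have hfoc : 2 * (d ⬝ᵥ H *ᵥ (u - y) + d ⬝ᵥ P *ᵥ u) = 0 := by
    refine eq_zero_of_forall_quadratic_nonneg (a := d ⬝ᵥ H *ᵥ d + d ⬝ᵥ P *ᵥ d) fun t ↦ ?_
    have ht := hmin y (W *ᵥ (y + t • z)) ⟨_, rfl⟩
    rw [mulVec_add, mulVec_smul, add_sub_right_comm, hH.dotProduct_mulVec_add_smul,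
      hP.dotProduct_mulVec_add_smul] at ht
    linarith
  calc (Wᵀ * (H + P) * W - Wᵀ * H) *ᵥ y ⬝ᵥ z = d ⬝ᵥ H *ᵥ (u - y) + d ⬝ᵥ P *ᵥ u := by
        rw [dotProduct_comm, sub_mulVec, ← mulVec_mulVec, ← mulVec_mulVec, ← mulVec_mulVec,
          ← mulVec_sub, dotProduct_transpose_mulVec, dotProduct_comm]
        simp only [add_mulVec, mulVec_sub, dotProduct_sub, dotProduct_add]
        ring
    _ = 0 := by linarith

variable [DecidableEq n]

theorem PosDef.inv_mul_similar_of_nonneg_of_le {𝕜 : Type*} [RCLike 𝕜] {H M : Matrix n n 𝕜}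
    (hH : H.PosDef) (hM : 0 ≤ M) (hMH : M ≤ H) :
    ∃ B N : Matrix n n 𝕜, IsUnit B.det ∧ 0 ≤ N ∧ N ≤ 1 ∧ H⁻¹ * M = B * N * B⁻¹ := by
  set R := CFC.sqrt H
  have hRR : R * R = H := CFC.sqrt_mul_sqrt_self H hH.posSemidef.nonneg
  have hRdet : IsUnit R.det := (isUnit_iff_isUnit_det R).mp <|
    (CFC.isUnit_sqrt_iff H hH.posSemidef.nonneg).mpr hH.isUnit
  have hR : IsSelfAdjoint R⁻¹ := by
    rw [IsSelfAdjoint, star_eq_conjTranspose, conjTranspose_nonsing_inv,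
      ← star_eq_conjTranspose, (IsSelfAdjoint.of_nonneg (CFC.sqrt_nonneg H)).star_eq]
  refine ⟨R⁻¹, R⁻¹ * M * R⁻¹, isUnit_nonsing_inv_det R hRdet, hR.conjugate_nonneg hM, ?_, ?_⟩
  · calc R⁻¹ * M * R⁻¹ ≤ R⁻¹ * H * R⁻¹ := hR.conjugate_le_conjugate hMH
      _ = 1 := by
        rw [← hRR, ← mul_assoc, nonsing_inv_mul _ hRdet, one_mul, mul_nonsing_inv _ hRdet]
  · rw [nonsing_inv_nonsing_inv _ hRdet, ← hRR, Matrix.mul_inv_rev]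
    simp only [mul_assoc, nonsing_inv_mul _ hRdet, mul_one]

theorem exists_ne_zero_map_mulVec_eq_smul {K L : Type*} [Field K] [Field L] (f : K →+* L)
    {W B N : Matrix n n K} (hB : IsUnit B.det) (hW : W = B * N * B⁻¹) {v : n → L} (hv : v ≠ 0)
    {μ : L} (h : W.map f *ᵥ v = μ • v) : ∃ u ≠ 0, N.map f *ᵥ u = μ • u := by
  have hC : B⁻¹ * W = N * B⁻¹ := by
    rw [hW, ← mul_assoc, ← mul_assoc, nonsing_inv_mul _ hB, one_mul]
  have hCu : IsUnit (B⁻¹.map f) :=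
    ((isUnit_iff_isUnit_det _).mpr (isUnit_nonsing_inv_det _ hB)).map f.mapMatrix
  refine ⟨B⁻¹.map f *ᵥ v, fun h0 ↦ hv ?_, ?_⟩
  · exact (mulVec_injective_iff_isUnit.mpr hCu) (h0.trans (mulVec_zero _).symm)
  · rw [mulVec_mulVec, ← Matrix.map_mul, ← hC, Matrix.map_mul, ← mulVec_mulVec, h, mulVec_smul]

variable {𝕜 : Type*} [RCLike 𝕜]

theorem map_algebraMap_nonneg {N : Matrix n n ℝ} (hN : 0 ≤ N) : 0 ≤ N.map (algebraMap ℝ 𝕜) := by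
  obtain ⟨X, rfl⟩ := CStarAlgebra.nonneg_iff_eq_star_mul_self.mp hN
  rw [Matrix.map_mul, star_eq_conjTranspose,
    conjTranspose_map _ fun _ ↦ (RCLike.conj_ofReal _).symm]
  exact star_mul_self_nonneg _

theorem map_algebraMap_le_one {N : Matrix n n ℝ} (hN : N ≤ 1) : N.map (algebraMap ℝ 𝕜) ≤ 1 := by
  rw [← sub_nonneg] at hN ⊢
  simpa [Matrix.map_sub, Matrix.map_one] using map_algebraMap_nonneg (𝕜 := 𝕜) hN

theorem nonneg_and_le_one_of_mulVec_eq_smul {A : Matrix n n 𝕜} (h0 : 0 ≤ A) (h1 : A ≤ 1)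
    {v : n → 𝕜} (hv : v ≠ 0) {μ : 𝕜} (h : A *ᵥ v = μ • v) : 0 ≤ μ ∧ μ ≤ 1 := by
  have hs : 0 < star v ⬝ᵥ v := dotProduct_star_self_pos_iff.mpr hv
  have hq : star v ⬝ᵥ A *ᵥ v = μ * (star v ⬝ᵥ v) := by rw [h, dotProduct_smul, smul_eq_mul]
  have hq0 := h0.posSemidef.dotProduct_mulVec_nonneg v
  have hq1 := (le_iff.mp h1).dotProduct_mulVec_nonneg v
  rw [hq] at hq0
  rw [sub_mulVec, one_mulVec, dotProduct_sub, hq, ← one_sub_mul] at hq1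
  exact ⟨RCLike.nonneg_of_mul_nonneg_left hq0 hs,
    sub_nonneg.mp (RCLike.nonneg_of_mul_nonneg_left hq1 hs)⟩

end Matrix

theorem stmt_15_general {n : ℕ} (W H P : Matrix (Fin n) (Fin n) ℝ)
    (hH : H.PosDef) (hP : P.PosSemidef)
    (hmin : ∀ y : Fin n → ℝ, ∀ x ∈ Set.range W.mulVec,
      (W.mulVec y - y) ⬝ᵥ H.mulVec (W.mulVec y - y) +
          (W.mulVec y) ⬝ᵥ P.mulVec (W.mulVec y) ≤
        (x - y) ⬝ᵥ H.mulVec (x - y) + x ⬝ᵥ P.mulVec x) :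
    (∃ S : Matrix (Fin n) (Fin n) ℝ, S.PosSemidef ∧ W = S * H) ∧
    (∃ B N : Matrix (Fin n) (Fin n) ℝ, IsUnit B.det ∧ N.PosSemidef ∧
      W = B * N * B⁻¹) ∧
    (∀ (lam : ℂ) (v : Fin n → ℂ), v ≠ 0 →
      (W.map (algebraMap ℝ ℂ)).mulVec v = lam • v →
      lam.im = 0 ∧ 0 ≤ lam.re ∧ lam.re ≤ 1) := by
  have hE : star W * (H + P) * W = star W * H := by
    rw [star_eq_conjTranspose, conjTranspose_eq_transpose_of_trivial]
    exact transpose_mul_add_mul_eq_of_forall_le (isHermitian_iff_isSymm.mp hH.isHermitian)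
      (isHermitian_iff_isSymm.mp hP.isHermitian) hmin
  have hM0 := nonneg_mul_of_star_mul_add_mul_eq hH.posSemidef.nonneg hP.nonneg hE
  have hMH := mul_le_self_of_star_mul_add_mul_eq hH.posSemidef.nonneg hP.nonneg hE
  have hHdet : IsUnit H.det := (isUnit_iff_isUnit_det H).mp hH.isUnit
  have hW : W = H⁻¹ * (H * W) := (nonsing_inv_mul_cancel_left _ _ hHdet).symm
  obtain ⟨B, N, hB, hN0, hN1, hsim⟩ := hH.inv_mul_similar_of_nonneg_of_le hM0 hMH
  refine ⟨⟨H⁻¹ * (H * W) * H⁻¹, ?_, ?_⟩, ⟨B, N, hB, hN0.posSemidef, hW.trans hsim⟩, ?_⟩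
  · exact (hH.inv.isHermitian.isSelfAdjoint.conjugate_nonneg hM0).posSemidef
  · rw [mul_assoc _ H⁻¹, nonsing_inv_mul _ hHdet, mul_one, ← hW]
  · intro lam v hv hev
    obtain ⟨u, hu0, hu⟩ := exists_ne_zero_map_mulVec_eq_smul _ hB (hW.trans hsim) hv hev
    obtain ⟨h0, h1⟩ := nonneg_and_le_one_of_mulVec_eq_smul (map_algebraMap_nonneg hN0)
      (map_algebraMap_le_one hN1) hu0 hu
    rw [Complex.le_def] at h0 h1
    exact ⟨h0.2.symm, h0.1, h1.1⟩

/-- ((i) ⇒ (ii) of the paper's main theorem.) If W ≠ 0 and for some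
symmetric positive definite H and symmetric positive semidefinite P, Wy minimizes
‖x−y‖²_H + xᵀPx over x ∈ range(W) for every y, then W = SH with S symmetric PSD, W is
similar to a symmetric PSD matrix, and every eigenvalue of W is real and lies in [0,1]. -/
theorem stmt_15 {n : ℕ} (W H P : Matrix (Fin n) (Fin n) ℝ)
    (hW0 : W ≠ 0) (hH : H.PosDef) (hP : P.PosSemidef)
    (hmin : ∀ y : Fin n → ℝ, ∀ x ∈ Set.range W.mulVec,
      (W.mulVec y - y) ⬝ᵥ H.mulVec (W.mulVec y - y) +
          (W.mulVec y) ⬝ᵥ P.mulVec (W.mulVec y) ≤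
        (x - y) ⬝ᵥ H.mulVec (x - y) + x ⬝ᵥ P.mulVec x) :
    (∃ S : Matrix (Fin n) (Fin n) ℝ, S.PosSemidef ∧ W = S * H) ∧
    (∃ B N : Matrix (Fin n) (Fin n) ℝ, IsUnit B.det ∧ N.PosSemidef ∧
      W = B * N * B⁻¹) ∧
    (∀ (lam : ℂ) (v : Fin n → ℂ), v ≠ 0 →
      (W.map (algebraMap ℝ ℂ)).mulVec v = lam • v →
      lam.im = 0 ∧ 0 ≤ lam.re ∧ lam.re ≤ 1) :=
  stmt_15_general W H P hH hP hmin
end
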